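/- arXiv:1905.11881 — 4 statements merged into one kernel-verified Lean document; each statement's English description precedes it below -/
import Mathlib

section
/- If a twice continuously differentiable function f: ℝ^d → ℝ satisfies the (L₀, L₁)-relaxed smoothness condition ‖∇²f(y)‖ ≤ L₀ + L₁‖∇f(y)‖ along the segment from x to x⁺, and ‖x⁺ − x‖ ≤ 1/L₁, then ‖∇f(x⁺)‖ ≤ 4(L₀/L₁ + ‖∇f(x)‖). -/
open Set

theorem gradient_bound_relaxed_smoothness
    {d : ℕ} (f : EuclideanSpace ℝ (Fin d) → ℝ) (L0 L1 : ℝ)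
    (hL0 : 0 < L0) (hL1 : 0 < L1)
    (hf : ContDiff ℝ 2 f)
    (x xp : EuclideanSpace ℝ (Fin d))
    (hsmooth : ∀ t ∈ Icc (0:ℝ) 1,
      ‖fderiv ℝ (gradient f) (x + t • (xp - x))‖ ≤
        L0 + L1 * ‖gradient f (x + t • (xp - x))‖)
    (hdist : ‖xp - x‖ ≤ 1 / L1) :
    ‖gradient f xp‖ ≤ 4 * (L0 / L1 + ‖gradient f x‖) := by
  set v := xp - x with hv
  -- gradient f is C¹
  have hgrad : ContDiff ℝ 1 (gradient f) := by
    have h1 : ContDiff ℝ 1 (fderiv ℝ f) := hf.fderiv_right (by norm_num)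
    have : gradient f = fun y => (InnerProductSpace.toDual ℝ _).symm (fderiv ℝ f y) := rfl
    rw [this]
    exact (InnerProductSpace.toDual ℝ _).symm.contDiff.comp h1
  set F : ℝ → EuclideanSpace ℝ (Fin d) := fun t => gradient f (x + t • v) with hF
  have hγ : ∀ t : ℝ, HasDerivAt (fun s : ℝ => x + s • v) v t := by
    intro t
    simpa using ((hasDerivAt_id t).smul_const v).const_add x
  have hF' : ∀ t : ℝ, HasDerivAt F (fderiv ℝ (gradient f) (x + t • v) v) t := by
    intro t
    exact ((hgrad.differentiable one_ne_zero (x + t • v)).hasFDerivAt).comp_hasDerivAt t (hγ t)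
  have key := norm_le_gronwallBound_of_norm_deriv_right_le
    (f := F) (f' := fun t => fderiv ℝ (gradient f) (x + t • v) v)
    (δ := ‖F 0‖) (K := 1) (ε := L0 / L1) (a := 0) (b := 1)
    (fun t _ => (hF' t).continuousAt.continuousWithinAt)
    (fun t _ => (hF' t).hasDerivWithinAt)
    le_rfl
    (by
      intro t ht
      have ht' : t ∈ Icc (0:ℝ) 1 := ⟨ht.1, ht.2.le⟩
      have hb := hsmooth t ht'
      have h1 : ‖fderiv ℝ (gradient f) (x + t • v) v‖ ≤
          ‖fderiv ℝ (gradient f) (x + t • v)‖ * ‖v‖ :=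
        (fderiv ℝ (gradient f) (x + t • v)).le_opNorm v
      have h2 : ‖fderiv ℝ (gradient f) (x + t • v)‖ * ‖v‖ ≤
          (L0 + L1 * ‖F t‖) * (1 / L1) := by
        apply mul_le_mul hb hdist (norm_nonneg _)
        positivity
      have : (L0 + L1 * ‖F t‖) * (1 / L1) = 1 * ‖F t‖ + L0 / L1 := by
        field_simp; ring
      linarith)
  have h1 := key 1 ⟨zero_le_one, le_rfl⟩
  have hF1 : F 1 = gradient f xp := by simp [hF, hv]
  have hF0 : F 0 = gradient f x := by simp [hF]
  rw [hF1, hF0] at h1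
  rw [gronwallBound_of_K_ne_0 one_ne_zero] at h1
  have he : Real.exp (1 * (1 - 0)) < 2.7182818286 := by
    have := Real.exp_one_lt_d9
    norm_num at this ⊢
    linarith
  have h0 : (0:ℝ) ≤ ‖gradient f x‖ := norm_nonneg _
  have h0' : (0:ℝ) < L0 / L1 := by positivity
  nlinarith [Real.exp_pos (1 * (1 - 0 : ℝ))]
end

section
/- For the function f(x) = e^{L₁x}/(L₁e) (for x > 1/L₁) extended symmetrically, and gradient descent x_{k+1} = x_k − h·f'(x_k) started at x₀ = (log M + 1)/L₁ with step size h > 2x₀/M, one has |x₁| > |x₀|; since |f'| is even, increasing in |x|, and grows super-linearly, the iterates satisfy |x_{k+1}| > |x_k| for all k, so gradient descent diverges. -/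
open Filter

theorem gd_diverges_on_exp_instance
    (L1 M : ℝ) (hL1 : 1 < L1) (hM : 1 < M) (f : ℝ → ℝ)
    (hf : ∀ y : ℝ, f y =
      if y < -(1 / L1) then Real.exp (-(L1 * y)) / (L1 * Real.exp 1)
      else if y ≤ 1 / L1 then L1 * y ^ 2 / 2 + 1 / (2 * L1)
      else Real.exp (L1 * y) / (L1 * Real.exp 1))
    (x : ℕ → ℝ) (h : ℝ)
    (hx0 : x 0 = (Real.log M + 1) / L1)
    (hrec : ∀ k, x (k + 1) = x k - h * deriv f (x k))
    (hh : h > 2 * x 0 / M) :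
    (∀ k, |x (k + 1)| > |x k|) ∧ Tendsto (fun k => |x k|) atTop atTop := by
  have hL0 : (0:ℝ) < L1 := by linarith
  have hM0 : (0:ℝ) < M := by linarith
  have hlogM : 0 < Real.log M := Real.log_pos hM
  set a : ℝ := (Real.log M + 1) / L1 with ha_def
  clear_value a
  have ha : 0 < a := by rw [ha_def]; positivity
  have hLa : L1 * a = Real.log M + 1 := by rw [ha_def]; field_simp
  have haL : 1 / L1 < a := by
    rw [div_lt_iff₀ hL0] at *
    nlinarith
  -- derivative on the positive side
  have derivpos : ∀ y : ℝ, 1 / L1 < y → deriv f y = Real.exp (L1 * y - 1) := by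
    intro y hy
    have h0 : (0:ℝ) < 1 / L1 := by positivity
    have hev : f =ᶠ[nhds y] fun z => Real.exp (L1 * z) / (L1 * Real.exp 1) := by
      filter_upwards [eventually_gt_nhds hy] with z hz
      rw [hf z, if_neg (by linarith), if_neg (not_le.2 hz)]
    rw [hev.deriv_eq]
    have h1 : HasDerivAt (fun t : ℝ => L1 * t) (L1 * 1) y := (hasDerivAt_id y).const_mul L1
    have h2 := (h1.exp).div_const (L1 * Real.exp 1)
    rw [h2.deriv]
    rw [Real.exp_sub]
    field_simp
  -- derivative on the negative side
  have derivneg : ∀ y : ℝ, y < -(1 / L1) → deriv f y = -Real.exp (-(L1 * y) - 1) := by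
    intro y hy
    have hev : f =ᶠ[nhds y] fun z => Real.exp (-(L1 * z)) / (L1 * Real.exp 1) := by
      filter_upwards [eventually_lt_nhds hy] with z hz
      rw [hf z, if_pos hz]
    rw [hev.deriv_eq]
    have h1 : HasDerivAt (fun t : ℝ => -(L1 * t)) (-(L1 * 1)) y :=
      ((hasDerivAt_id y).const_mul L1).neg
    have h2 := (h1.exp).div_const (L1 * Real.exp 1)
    rw [h2.deriv]
    rw [Real.exp_sub]
    field_simp
  -- exp lower bound
  have hexpbd : ∀ t : ℝ, a ≤ t → M * t / a ≤ Real.exp (L1 * t - 1) := by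
    intro t ht
    have e1 : Real.exp (L1 * t - 1) = M * Real.exp (L1 * (t - a)) := by
      have : L1 * t - 1 = Real.log M + L1 * (t - a) := by
        rw [mul_sub, hLa]; ring
      rw [this, Real.exp_add, Real.exp_log hM0]
    rw [e1]
    have e2 : 1 + L1 * (t - a) ≤ Real.exp (L1 * (t - a)) := by
      have := Real.add_one_le_exp (L1 * (t - a))
      linarith
    have e3 : M * t / a ≤ M * (1 + L1 * (t - a)) := by
      rw [div_le_iff₀ ha]
      have e4 : M * (1 + L1 * (t - a)) * a = M * t + M * (Real.log M * (t - a)) := by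
        linear_combination (M * (t - a)) * hLa
      nlinarith [mul_nonneg (mul_nonneg hM0.le hlogM.le) (sub_nonneg.2 ht)]
    nlinarith
  set c : ℝ := h * M / a - 1 with hc_def
  clear_value c
  have hx0a : x 0 = a := hx0
  have hc : 1 < c := by
    have : 2 * a / M < h := by rwa [hx0a] at hh
    rw [div_lt_iff₀ hM0] at this
    rw [hc_def, lt_sub_iff_add_lt, lt_div_iff₀ ha]
    nlinarith
  -- key step
  have key : ∀ z : ℝ, a ≤ |z| → c * |z| ≤ |z - h * deriv f z| := by
    intro z hz
    have hh0 : 0 < h := lt_trans (by rw [hx0a]; exact div_pos (by linarith) hM0) hh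
    rcases le_or_gt 0 z with hz0 | hz0
    · have hza : a ≤ z := by rwa [abs_of_nonneg hz0] at hz
      have hexp := hexpbd z hza
      rw [derivpos z (lt_of_lt_of_le haL hza), abs_of_nonneg hz0]
      refine le_abs.2 (Or.inr ?_)
      have h4 : h * (M * z / a) ≤ h * Real.exp (L1 * z - 1) :=
        mul_le_mul_of_nonneg_left hexp hh0.le
      have h5 : h * (M * z / a) = c * z + z := by
        rw [hc_def]; field_simp; ring
      linarith
    · have hza : a ≤ -z := by rwa [abs_of_neg hz0] at hz
      have hexp := hexpbd (-z) hza
      have hyneg : z < -(1 / L1) := by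
        have := lt_of_lt_of_le haL hza; linarith
      rw [derivneg z hyneg, abs_of_neg hz0]
      refine le_abs.2 (Or.inl ?_)
      have heq : -(L1 * z) - 1 = L1 * (-z) - 1 := by ring
      rw [heq]
      have h4 : h * (M * (-z) / a) ≤ h * Real.exp (L1 * (-z) - 1) :=
        mul_le_mul_of_nonneg_left hexp hh0.le
      have h5 : h * (M * (-z) / a) = c * (-z) + (-z) := by
        rw [hc_def]; field_simp; ring
      linarith
  -- geometric growth
  have hmono : ∀ k, c ^ k * a ≤ |x k| := by
    intro k
    induction k with
    | zero => simp [hx0a, abs_of_pos ha]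
    | succ k ih =>
      have hck : (1:ℝ) ≤ c ^ k := one_le_pow₀ hc.le
      have hak : a ≤ |x k| := le_trans (by nlinarith) ih
      have := key (x k) hak
      rw [hrec k]
      calc c ^ (k+1) * a = c * (c ^ k * a) := by ring
        _ ≤ c * |x k| := by nlinarith
        _ ≤ |x k - h * deriv f (x k)| := this
  have hak : ∀ k, a ≤ |x k| := by
    intro k
    have hck : (1:ℝ) ≤ c ^ k := one_le_pow₀ hc.le
    have := hmono k
    nlinarith
  constructor
  · intro k
    have h1 := key (x k) (hak k)
    have h2 := hak k
    rw [hrec k]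
    nlinarith
  · refine tendsto_atTop_mono hmono ?_
    exact (tendsto_pow_atTop_atTop_of_one_lt hc).atTop_mul_const ha
end

section
/- Let f(x) = −2ε(x+1) + 5ε/4 for x < −1, f(x) = (ε/4)(6x² − x⁴) for |x| ≤ 1, f(x) = 2ε(x−1) + 5ε/4 for x > 1. Consider gradient descent x_{k+1} = x_k − h f'(x_k) with x₀ = 1 + Δ/ε and step size h ≤ (2 log M + 2)/(M L₁). Then for all k ≤ Δ L₁ M/(4ε²(log M + 1)), we have x_k ≥ 1 and |f'(x_k)| = 2ε. -/
theorem gd_lower_bound_slow_progress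
    (ε Δ M L1 : ℝ) (hε : 0 < ε) (hΔ : 0 < Δ) (hM : 1 < M) (hL1 : 1 < L1)
    (f : ℝ → ℝ)
    (hf : ∀ x : ℝ, f x =
      if x < -1 then -2 * ε * (x + 1) + 5 * ε / 4
      else if x ≤ 1 then (ε / 4) * (6 * x ^ 2 - x ^ 4)
      else 2 * ε * (x - 1) + 5 * ε / 4)
    (x : ℕ → ℝ) (h : ℝ) (hh_pos : 0 < h)
    (hh : h ≤ (2 * Real.log M + 2) / (M * L1))
    (hx0 : x 0 = 1 + Δ / ε)
    (hrec : ∀ k, x (k + 1) = x k - h * deriv f (x k)) :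
    ∀ k : ℕ, (k : ℝ) ≤ Δ * L1 * M / (4 * ε ^ 2 * (Real.log M + 1)) →
      1 ≤ x k ∧ |deriv f (x k)| = 2 * ε := by
  set L := Real.log M with hLdef
  have hlog : 0 < L := Real.log_pos hM
  have hM0 : (0:ℝ) < M := by linarith
  have hL10 : (0:ℝ) < L1 := by linarith
  have hML : (0:ℝ) < M * L1 := by positivity
  -- f equals the linear function on [1, ∞)
  have hfg : ∀ y : ℝ, 1 ≤ y → f y = 2 * ε * (y - 1) + 5 * ε / 4 := by
    intro y hy
    rw [hf]
    rw [if_neg (by linarith)]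
    by_cases hy1 : y ≤ 1
    · have : y = 1 := le_antisymm hy1 hy
      subst this
      rw [if_pos le_rfl]
      ring
    · rw [if_neg hy1]
  -- derivative of the linear part
  have hg : ∀ y : ℝ, HasDerivAt (fun y : ℝ => 2 * ε * (y - 1) + 5 * ε / 4) (2 * ε) y := by
    intro y
    have h1 : HasDerivAt (fun y : ℝ => 2 * ε * (y - 1) + 5 * ε / 4) (2 * ε * 1) y :=
      (((hasDerivAt_id y).sub_const 1).const_mul (2 * ε)).add_const _
    simpa using h1
  -- derivative of the polynomial part at 1
  have hp : HasDerivAt (fun y : ℝ => (ε / 4) * (6 * y ^ 2 - y ^ 4)) (2 * ε) 1 := by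
    have h2 : HasDerivAt (fun y : ℝ => 6 * y ^ 2 - y ^ 4)
        (6 * (2 * (1:ℝ) ^ 1) - 4 * (1:ℝ) ^ 3) 1 :=
      ((hasDerivAt_pow 2 (1:ℝ)).const_mul 6).sub (hasDerivAt_pow 4 (1:ℝ))
    have h3 := h2.const_mul (ε / 4)
    refine h3.congr_deriv ?_
    norm_num
    ring
  -- derivative of f on [1, ∞)
  have hderiv : ∀ y : ℝ, 1 ≤ y → HasDerivAt f (2 * ε) y := by
    intro y hy
    rcases eq_or_lt_of_le hy with heq | hlt
    · subst heq
      have hIci : HasDerivWithinAt f (2 * ε) (Set.Ici 1) 1 := by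
        refine ((hg 1).hasDerivWithinAt).congr (fun z hz => hfg z hz) (hfg 1 le_rfl)
      have hIic : HasDerivWithinAt f (2 * ε) (Set.Iic 1) 1 := by
        have hev : f =ᶠ[nhdsWithin 1 (Set.Iic 1)]
            (fun y : ℝ => (ε / 4) * (6 * y ^ 2 - y ^ 4)) := by
          have h1 : ∀ᶠ z in nhdsWithin 1 (Set.Iic 1), (-1:ℝ) < z :=
            eventually_nhdsWithin_of_eventually_nhds (eventually_gt_nhds (by norm_num))
          filter_upwards [h1, self_mem_nhdsWithin] with z hz1 hz2
          rw [hf, if_neg (by linarith), if_pos (show z ≤ 1 from hz2)]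
        have hf1 : f 1 = (ε / 4) * (6 * (1:ℝ) ^ 2 - (1:ℝ) ^ 4) := by
          rw [hf]
          norm_num
        exact (hp.hasDerivWithinAt).congr_of_eventuallyEq hev hf1
      have := hIic.union hIci
      rw [Set.Iic_union_Ici] at this
      exact hasDerivWithinAt_univ.mp this
    · have hev : f =ᶠ[nhds y] (fun z : ℝ => 2 * ε * (z - 1) + 5 * ε / 4) := by
        filter_upwards [eventually_gt_nhds hlt] with z hz
        exact hfg z hz.le
      exact (hg y).congr_of_eventuallyEq hev
  -- key inequality
  have key : ∀ t : ℝ, 0 ≤ t →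
      t ≤ Δ * L1 * M / (4 * ε ^ 2 * (L + 1)) → 2 * ε * h * t ≤ Δ / ε := by
    intro t ht0 htB
    have hden : (0:ℝ) < 4 * ε ^ 2 * (L + 1) := by positivity
    have h1 : t * (4 * ε ^ 2 * (L + 1)) ≤ Δ * L1 * M := (le_div_iff₀ hden).mp htB
    rw [le_div_iff₀ hε]
    have hnn : (0:ℝ) ≤ 2 * ε * t * ε := by positivity
    have h2 : 2 * ε * h * t * ε ≤ 2 * ε * t * ε * ((2 * L + 2) / (M * L1)) := by
      calc 2 * ε * h * t * ε = 2 * ε * t * ε * h := by ring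
        _ ≤ _ := mul_le_mul_of_nonneg_left hh hnn
    have h3 : 2 * ε * t * ε * ((2 * L + 2) / (M * L1)) ≤ Δ := by
      rw [mul_div_assoc', div_le_iff₀ hML]
      nlinarith [h1]
    linarith
  -- main induction
  have main : ∀ k : ℕ, (k : ℝ) ≤ Δ * L1 * M / (4 * ε ^ 2 * (L + 1)) →
      1 + Δ / ε - 2 * ε * h * k ≤ x k := by
    intro k
    induction k with
    | zero => intro _; simp [hx0]
    | succ k ih =>
      intro hk1
      have hk : (k : ℝ) ≤ Δ * L1 * M / (4 * ε ^ 2 * (L + 1)) := by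
        refine le_trans ?_ hk1
        push_cast
        linarith
      have hkey := key k (Nat.cast_nonneg k) hk
      have hxk := ih hk
      have hxk1 : 1 ≤ x k := by linarith
      have hd : deriv f (x k) = 2 * ε := (hderiv (x k) hxk1).deriv
      have := hrec k
      rw [hd] at this
      rw [this]
      push_cast
      ring_nf
      ring_nf at hxk
      linarith
  intro k hk
  have hkey := key k (Nat.cast_nonneg k) hk
  have hxk := main k hk
  have hxk1 : 1 ≤ x k := by linarith
  refine ⟨hxk1, ?_⟩
  rw [(hderiv (x k) hxk1).deriv]
  exact abs_of_pos (by linarith)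
end

section
/- Suppose f: ℝ^d → ℝ is twice continuously differentiable with ‖∇²f(y)‖ ≤ L₀ + L₁‖∇f(y)‖ for all y, and suppose along the GD path γ(t) = x_k − th∇f(x_k), t ∈ [0,1], we have ‖∇f(γ(t))‖ ≤ M for all t. If h = 1/(2(ML₁ + L₀)) and ‖∇f(x_k)‖ ≥ ε, then f(x_{k+1}) ≤ f(x_k) − ε²/(4(ML₁ + L₀)). -/
open Set

set_option maxHeartbeats 1000000 in
theorem gd_descent_bounded_gradient_path
    {d : ℕ} (f : EuclideanSpace ℝ (Fin d) → ℝ)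
    (hf : ContDiff ℝ 2 f)
    (L0 L1 M ε : ℝ) (hL0 : 0 < L0) (hL1 : 0 < L1) (hM : 0 < M) (hε : 0 < ε)
    (hsmooth : ∀ y : EuclideanSpace ℝ (Fin d),
      ‖fderiv ℝ (gradient f) y‖ ≤ L0 + L1 * ‖gradient f y‖)
    (xk : EuclideanSpace ℝ (Fin d)) (h : ℝ)
    (hpath : ∀ t ∈ Icc (0:ℝ) 1,
      ‖gradient f (xk - (t * h) • gradient f xk)‖ ≤ M)
    (hh : h = 1 / (2 * (M * L1 + L0)))
    (hgrad : ε ≤ ‖gradient f xk‖) :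
    f (xk - h • gradient f xk) ≤ f xk - ε ^ 2 / (4 * (M * L1 + L0)) := by
  set g : EuclideanSpace ℝ (Fin d) := gradient f xk with hg
  set L : ℝ := M * L1 + L0 with hLdef
  have hL : 0 < L := by positivity
  have hhpos : 0 < h := by rw [hh]; positivity
  set γ : ℝ → EuclideanSpace ℝ (Fin d) := fun t => xk - (t * h) • g with hγ
  -- gradient f is C¹, hence differentiable
  have hgradC1 : ContDiff ℝ 1 (gradient f) := by
    have h1 : ContDiff ℝ 1 (fderiv ℝ f) := hf.fderiv_right (by norm_num)
    have heq : gradient f =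
        fun y => (InnerProductSpace.toDual ℝ (EuclideanSpace ℝ (Fin d))).symm (fderiv ℝ f y) :=
      rfl
    rw [heq]
    exact (InnerProductSpace.toDual ℝ (EuclideanSpace ℝ (Fin d))).symm.contDiff.comp h1
  have hgdiff : Differentiable ℝ (gradient f) := hgradC1.differentiable one_ne_zero
  have hfdiff : Differentiable ℝ f := hf.differentiable two_ne_zero
  -- segment and its description
  have hseg_mem : ∀ t ∈ Icc (0:ℝ) 1, γ t ∈ segment ℝ xk (xk - h • g) := by
    intro t ht
    rw [segment_eq_image']
    refine ⟨t, ht, ?_⟩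
    show xk + t • (xk - h • g - xk) = xk - (t * h) • g
    module
  have hseg_bound : ∀ p ∈ segment ℝ xk (xk - h • g), ‖fderiv ℝ (gradient f) p‖ ≤ L := by
    intro p hp
    rw [segment_eq_image'] at hp
    obtain ⟨t, ht, rfl⟩ := hp
    show ‖fderiv ℝ (gradient f) (xk + t • (xk - h • g - xk))‖ ≤ L
    have hpe : xk + t • (xk - h • g - xk) = xk - (t * h) • g := by module
    rw [hpe]
    calc ‖fderiv ℝ (gradient f) (xk - (t * h) • g)‖
        ≤ L0 + L1 * ‖gradient f (xk - (t * h) • g)‖ := hsmooth _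
      _ ≤ L0 + L1 * M := by
          have := hpath t ht
          nlinarith
      _ = L := by ring
  -- Lipschitz estimate along the path
  have hlip : ∀ t ∈ Icc (0:ℝ) 1, ‖gradient f (γ t) - g‖ ≤ L * (t * h * ‖g‖) := by
    intro t ht
    have h0 : γ 0 = xk := by simp [hγ]
    have key := (convex_segment xk (xk - h • g)).norm_image_sub_le_of_norm_fderiv_le
      (fun p _ => hgdiff p) hseg_bound (hseg_mem 0 ⟨le_refl 0, zero_le_one⟩)
      (hseg_mem t ht)
    rw [h0] at key
    calc ‖gradient f (γ t) - g‖ ≤ L * ‖γ t - xk‖ := key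
      _ = L * (t * h * ‖g‖) := by
          rw [hγ]
          simp only [sub_sub_cancel_left, norm_neg, norm_smul, Real.norm_eq_abs,
            abs_of_nonneg (mul_nonneg ht.1 hhpos.le), mul_assoc]
  -- derivative of f along the path
  set ψ : ℝ → ℝ := fun t => fderiv ℝ f (γ t) (-(h • g)) with hψ
  have hγderiv : ∀ t : ℝ, HasDerivAt γ (-(h • g)) t := by
    intro t
    have h1 : HasDerivAt (fun s : ℝ => s * h) h t := by
      simpa using (hasDerivAt_id t).mul_const h
    have h2 : HasDerivAt (fun s : ℝ => (s * h) • g) (h • g) t := h1.smul_const g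
    simpa using h2.const_sub xk
  have hφderiv : ∀ t : ℝ, HasDerivAt (fun s => f (γ s)) (ψ t) t := fun t =>
    (hfdiff (γ t)).hasFDerivAt.comp_hasDerivAt t (hγderiv t)
  have hγcont : Continuous γ := by
    apply Continuous.sub continuous_const
    exact (continuous_id.mul continuous_const).smul continuous_const
  have hψcont : Continuous ψ := by
    apply Continuous.clm_apply _ continuous_const
    exact (hf.continuous_fderiv two_ne_zero).comp hγcont
  -- FTC
  have hFTC : f (γ 1) - f (γ 0) = ∫ t in (0:ℝ)..1, ψ t :=
    (intervalIntegral.integral_eq_sub_of_hasDerivAt (fun t _ => hφderiv t)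
      (hψcont.intervalIntegrable 0 1)).symm
  -- pointwise bound on ψ
  have hψbound : ∀ t ∈ Icc (0:ℝ) 1,
      ψ t ≤ -(h * ‖g‖ ^ 2) + L * h ^ 2 * ‖g‖ ^ 2 * t := by
    intro t ht
    have hinner : ψ t = @inner ℝ _ _ (gradient f (γ t)) (-(h • g)) :=
      (InnerProductSpace.toDual_symm_apply).symm
    have hsplit : @inner ℝ _ _ (gradient f (γ t)) (-(h • g)) =
        @inner ℝ _ _ g (-(h • g)) + @inner ℝ _ _ (gradient f (γ t) - g) (-(h • g)) := by
      rw [← inner_add_left]; congr 1; abel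
    have h1 : @inner ℝ _ _ g (-(h • g)) = -(h * ‖g‖ ^ 2) := by
      rw [inner_neg_right, real_inner_smul_right, real_inner_self_eq_norm_sq]
    have h2 : @inner ℝ _ _ (gradient f (γ t) - g) (-(h • g)) ≤
        ‖gradient f (γ t) - g‖ * (h * ‖g‖) := by
      calc @inner ℝ _ _ (gradient f (γ t) - g) (-(h • g))
          ≤ ‖gradient f (γ t) - g‖ * ‖-(h • g)‖ := real_inner_le_norm _ _
        _ = ‖gradient f (γ t) - g‖ * (h * ‖g‖) := by
            rw [norm_neg, norm_smul, Real.norm_eq_abs, abs_of_nonneg hhpos.le]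
    have h3 := hlip t ht
    have h4 : ‖gradient f (γ t) - g‖ * (h * ‖g‖) ≤ L * (t * h * ‖g‖) * (h * ‖g‖) :=
      mul_le_mul_of_nonneg_right h3 (by positivity)
    rw [hinner, hsplit, h1]
    nlinarith [h2, h4]
  -- integrate the bound
  have hrc : Continuous (fun t : ℝ => -(h * ‖g‖ ^ 2) + L * h ^ 2 * ‖g‖ ^ 2 * t) :=
    continuous_const.add (continuous_const.mul continuous_id')
  have hintle : (∫ t in (0:ℝ)..1, ψ t) ≤
      ∫ t in (0:ℝ)..1, (-(h * ‖g‖ ^ 2) + L * h ^ 2 * ‖g‖ ^ 2 * t) :=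
    intervalIntegral.integral_mono_on zero_le_one
      (hψcont.intervalIntegrable 0 1) (hrc.intervalIntegrable 0 1) hψbound
  have hintval : (∫ t in (0:ℝ)..1, (-(h * ‖g‖ ^ 2) + L * h ^ 2 * ‖g‖ ^ 2 * t))
      = -(h * ‖g‖ ^ 2) + L * h ^ 2 * ‖g‖ ^ 2 / 2 := by
    rw [intervalIntegral.integral_add (g := fun t : ℝ => L * h ^ 2 * ‖g‖ ^ 2 * t) intervalIntegrable_const
      (((continuous_const.mul continuous_id')).intervalIntegrable 0 1),
      intervalIntegral.integral_const_mul, integral_id]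
    simp
    ring
  have hγ1 : γ 1 = xk - h • g := by simp [hγ]
  have hγ0 : γ 0 = xk := by simp [hγ]
  have hkey : f (xk - h • g) ≤ f xk + (-(h * ‖g‖ ^ 2) + L * h ^ 2 * ‖g‖ ^ 2 / 2) := by
    have heq := hFTC
    rw [hγ1, hγ0] at heq
    linarith [hintle, hintval.le, hintval.ge, heq.le, heq.ge]
  -- final arithmetic
  have hgsq : ε ^ 2 ≤ ‖g‖ ^ 2 := by nlinarith [norm_nonneg g, hgrad, hε]
  have harith : -(h * ‖g‖ ^ 2) + L * h ^ 2 * ‖g‖ ^ 2 / 2 ≤ - (ε ^ 2 / (4 * L)) := by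
    have h38 : -(h * ‖g‖ ^ 2) + L * h ^ 2 * ‖g‖ ^ 2 / 2 = -(3 * ‖g‖ ^ 2 / (8 * L)) := by
      rw [hh]; field_simp; ring
    rw [h38, neg_le_neg_iff]
    rw [div_le_div_iff₀ (by positivity : (0:ℝ) < 4 * L) (by positivity : (0:ℝ) < 8 * L)]
    nlinarith [mul_le_mul_of_nonneg_right hgsq hL.le]
  calc f (xk - h • g) ≤ f xk + (-(h * ‖g‖ ^ 2) + L * h ^ 2 * ‖g‖ ^ 2 / 2) := hkey
    _ ≤ f xk + (- (ε ^ 2 / (4 * L))) := by linarith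
    _ = f xk - ε ^ 2 / (4 * L) := by ring
end
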